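/- arXiv:1503.00968 — 2 statements merged into one kernel-verified Lean document; each statement's English description precedes it below -/
import Mathlib

section
/- Let (M,g) be a pseudo-Riemannian manifold and let L be a symmetric (0,2)-tensor field satisfying ∇_X L = X^♭ ⊙ Λ for all vector fields X (where Λ is a 1-form, ⊙ denotes symmetric product α⊙β = α⊗β + β⊗α, and X^♭ = g(X,·)). Then Λ = dλ where λ = (1/2)·trace(L^♯), i.e., Λ is exact with potential half the g-trace of L. -/
open Real Matrix Finset

/-! Coordinate framework for pseudo-Riemannian geometry on `ℝ^ι`:
metrics are matrix-valued functions, and the Levi-Civita connection is given by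
the Christoffel symbols. -/

variable {ι : Type} [Fintype ι] [DecidableEq ι]

/-- Partial derivative in the `i`-th coordinate direction. -/
noncomputable def pd (i : ι) (f : (ι → ℝ) → ℝ) (x : ι → ℝ) : ℝ :=
  fderiv ℝ f x (Pi.single i 1)

/-- Christoffel symbols `Γ^k_{ij}` of a metric `g` in coordinates. -/
noncomputable def christoffel (g : (ι → ℝ) → Matrix ι ι ℝ) (k i j : ι) (x : ι → ℝ) : ℝ :=
  (1 / 2) * ∑ l, (g x)⁻¹ k l *
    (pd i (fun y => g y j l) x + pd j (fun y => g y i l) x - pd l (fun y => g y i j) x)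

/-- Covariant derivative `(∇_{∂k} L)_{ij}` of a `(0,2)`-tensor field `L`. -/
noncomputable def covDer2 (g L : (ι → ℝ) → Matrix ι ι ℝ) (k i j : ι) (x : ι → ℝ) : ℝ :=
  pd k (fun y => L y i j) x - (∑ l, christoffel g l k i x * L x l j)
    - ∑ l, christoffel g l k j x * L x i l

/-- Covariant derivative `(∇_{∂k} Λ)_i` of a 1-form `Λ`. -/
noncomputable def covDer1 (g : (ι → ℝ) → Matrix ι ι ℝ) (Λ : (ι → ℝ) → ι → ℝ)
    (k i : ι) (x : ι → ℝ) : ℝ :=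
  pd k (fun y => Λ y i) x - ∑ l, christoffel g l k i x * Λ x l

/-- Covariant derivative `(∇_{∂k} X)^l` of a vector field `X`. -/
noncomputable def covDerVF (g : (ι → ℝ) → Matrix ι ι ℝ) (X : (ι → ℝ) → ι → ℝ)
    (k l : ι) (x : ι → ℝ) : ℝ :=
  pd k (fun y => X y l) x + ∑ m, christoffel g l k m x * X x m

/-- The `l`-th component of `R(∂i,∂j)∂k`, with the curvature convention
`R(X,Y)Z = ∇_X ∇_Y Z − ∇_Y ∇_X Z − ∇_{[X,Y]} Z`. -/
noncomputable def riem (g : (ι → ℝ) → Matrix ι ι ℝ) (l i j k : ι) (x : ι → ℝ) : ℝ :=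
  pd i (christoffel g l j k) x - pd j (christoffel g l i k) x
    + (∑ m, christoffel g l i m x * christoffel g m j k x)
    - ∑ m, christoffel g l j m x * christoffel g m i k x

/-- Ricci tensor `Ric(∂i,∂j) = trace (Z ↦ R(Z,∂i)∂j)`. -/
noncomputable def ricci (g : (ι → ℝ) → Matrix ι ι ℝ) (i j : ι) (x : ι → ℝ) : ℝ :=
  ∑ l, riem g l l i j x

/-- All matrix entries of `g` are smooth functions. -/
def SmoothM (g : (ι → ℝ) → Matrix ι ι ℝ) : Prop :=
  ∀ i j, ContDiff ℝ (⊤ : ℕ∞) fun x => g x i j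

/-- `g` is symmetric. -/
def SymM (g : (ι → ℝ) → Matrix ι ι ℝ) : Prop := ∀ x, (g x)ᵀ = g x

/-- `g` is everywhere nondegenerate. -/
def NondegM (g : (ι → ℝ) → Matrix ι ι ℝ) : Prop := ∀ x, (g x).det ≠ 0

/-- The projective equation `∇_X L = X^♭ ⊙ Λ`; in coordinates
`(∇_{∂k} L)_{ij} = g_{ki} Λ_j + g_{kj} Λ_i`. -/
def ProjEqn (g L : (ι → ℝ) → Matrix ι ι ℝ) (Λ : (ι → ℝ) → ι → ℝ) : Prop :=
  ∀ k i j x, covDer2 g L k i j x = g x k i * Λ x j + g x k j * Λ x i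

/-- `ξ` is a cone vector field: `∇̂_X ξ = X` for all `X`. -/
def IsConeVF (g : (ι → ℝ) → Matrix ι ι ℝ) (ξ : (ι → ℝ) → ι → ℝ) : Prop :=
  ∀ k l x, covDerVF g ξ k l x = if k = l then 1 else 0

section AuxForStatement0

variable {ι : Type} [Fintype ι] [DecidableEq ι]


lemma pd_congr' {f f' : (ι → ℝ) → ℝ} (h : ∀ y, f y = f' y) (i : ι) (x : ι → ℝ) :
    pd i f x = pd i f' x := by
  have : f = f' := funext h
  rw [this]

lemma pd_const' (i : ι) (c : ℝ) (x : ι → ℝ) : pd i (fun _ => c) x = 0 := by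
  simp [pd]

lemma pd_sum' {α : Type*} (i : ι) (s : Finset α) (f : α → (ι → ℝ) → ℝ) (x : ι → ℝ)
    (h : ∀ a ∈ s, DifferentiableAt ℝ (f a) x) :
    pd i (fun y => ∑ a ∈ s, f a y) x = ∑ a ∈ s, pd i (f a) x := by
  unfold pd
  rw [fderiv_fun_sum h]
  simp

lemma pd_mul' {f h : (ι → ℝ) → ℝ} (i : ι) (x : ι → ℝ)
    (hf : DifferentiableAt ℝ f x) (hh : DifferentiableAt ℝ h x) :
    pd i (fun y => f y * h y) x = pd i f x * h x + f x * pd i h x := by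
  unfold pd
  rw [fderiv_fun_mul hf hh]
  simp
  ring

lemma pd_const_mul' {f : (ι → ℝ) → ℝ} (i : ι) (x : ι → ℝ) (c : ℝ)
    (hf : DifferentiableAt ℝ f x) :
    pd i (fun y => c * f y) x = c * pd i f x := by
  rw [pd_mul' i x (differentiableAt_const c) hf, pd_const']
  ring

lemma diffAt_finset_prod' {α : Type*} {E : Type*} [NormedAddCommGroup E] [NormedSpace ℝ E]
    {x : E} (s : Finset α) (f : α → E → ℝ) (h : ∀ a ∈ s, DifferentiableAt ℝ (f a) x) :
    DifferentiableAt ℝ (fun y => ∏ a ∈ s, f a y) x := by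
  classical
  induction s using Finset.induction with
  | empty => simpa using differentiableAt_const (1 : ℝ)
  | @insert a s ha ih =>
      simp only [Finset.prod_insert ha]
      exact (h _ (Finset.mem_insert_self _ _)).mul
        (ih fun b hb => h b (Finset.mem_insert_of_mem hb))

lemma diffAt_det' {M : (ι → ℝ) → Matrix ι ι ℝ} {x : ι → ℝ}
    (h : ∀ i j, DifferentiableAt ℝ (fun y => M y i j) x) :
    DifferentiableAt ℝ (fun y => (M y).det) x := by
  simp only [Matrix.det_apply']
  apply DifferentiableAt.fun_sum
  intro σ _
  exact (diffAt_finset_prod' _ _ fun a _ => h _ _).const_mul _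

lemma diffAt_inv' {g : (ι → ℝ) → Matrix ι ι ℝ} (hg : SmoothM g) (hgn : NondegM g)
    (a b : ι) (x : ι → ℝ) :
    DifferentiableAt ℝ (fun y => (g y)⁻¹ a b) x := by
  have hdg : ∀ i j, DifferentiableAt ℝ (fun y => g y i j) x :=
    fun i j => ((hg i j).differentiable (by simp)).differentiableAt
  have hd : ∀ y, (g y)⁻¹ a b = ((g y).det)⁻¹ * (g y).adjugate a b := by
    intro y
    rw [Matrix.inv_def, Ring.inverse_eq_inv']
    simp [Matrix.smul_apply]
  simp only [hd]
  have h1 : DifferentiableAt ℝ (fun y => (g y).det) x := diffAt_det' hdg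
  have h2 : DifferentiableAt ℝ (fun y => (g y).adjugate a b) x := by
    simp only [Matrix.adjugate_apply]
    apply diffAt_det'
    intro i j
    simp only [Matrix.updateRow_apply]
    by_cases h : i = b <;> simp [h, hdg i j]
  exact (h1.inv (hgn x)).mul h2

lemma sum_g_inv' {g : (ι → ℝ) → Matrix ι ι ℝ} (hgn : NondegM g) (a b : ι) (y : ι → ℝ) :
    ∑ c, g y a c * (g y)⁻¹ c b = if a = b then 1 else 0 := by
  have h := Matrix.mul_nonsing_inv (g y) (isUnit_iff_ne_zero.mpr (hgn y))
  have h2 := congrFun (congrFun h a) b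
  simpa [Matrix.mul_apply, Matrix.one_apply] using h2

lemma sum_inv_g' {g : (ι → ℝ) → Matrix ι ι ℝ} (hgn : NondegM g) (a b : ι) (y : ι → ℝ) :
    ∑ c, (g y)⁻¹ a c * g y c b = if a = b then 1 else 0 := by
  have h := Matrix.nonsing_inv_mul (g y) (isUnit_iff_ne_zero.mpr (hgn y))
  have h2 := congrFun (congrFun h a) b
  simpa [Matrix.mul_apply, Matrix.one_apply] using h2

lemma inv_symm' {g : (ι → ℝ) → Matrix ι ι ℝ} (hgs : SymM g) (a b : ι) (y : ι → ℝ) :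
    (g y)⁻¹ a b = (g y)⁻¹ b a := by
  have h : ((g y)⁻¹)ᵀ = (g y)⁻¹ := by
    rw [Matrix.transpose_nonsing_inv, hgs y]
  conv_lhs => rw [← h]
  rfl

lemma g_symm' {g : (ι → ℝ) → Matrix ι ι ℝ} (hgs : SymM g) (a b : ι) (y : ι → ℝ) :
    g y a b = g y b a := by
  conv_lhs => rw [← hgs y]
  rfl

/-- contraction of Christoffel symbols with the metric -/
lemma chris_g {g : (ι → ℝ) → Matrix ι ι ℝ} (hgs : SymM g) (hgn : NondegM g)
    (k i j : ι) (x : ι → ℝ) :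
    ∑ l, christoffel g l k i x * g x l j
      = (1/2) * (pd k (fun y => g y i j) x + pd i (fun y => g y k j) x
          - pd j (fun y => g y k i) x) := by
  set D : ι → ℝ := fun m => pd k (fun y => g y i m) x + pd i (fun y => g y k m) x
      - pd m (fun y => g y k i) x with hD
  have key : ∀ m, (∑ l, (g x)⁻¹ l m * g x l j) = if m = j then 1 else 0 := by
    intro m
    rw [← sum_inv_g' hgn m j x]
    exact Finset.sum_congr rfl fun l _ => by rw [inv_symm' hgs l m x]
  calc ∑ l, christoffel g l k i x * g x l j
      = ∑ l, ∑ m, (1/2) * D m * ((g x)⁻¹ l m * g x l j) := by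
        apply Finset.sum_congr rfl; intro l _
        unfold christoffel
        rw [mul_assoc, Finset.sum_mul, Finset.mul_sum]
        exact Finset.sum_congr rfl fun m _ => by ring
    _ = ∑ m, ∑ l, (1/2) * D m * ((g x)⁻¹ l m * g x l j) := Finset.sum_comm
    _ = ∑ m, (1/2) * D m * (if m = j then 1 else 0) := by
        apply Finset.sum_congr rfl; intro m _
        rw [← Finset.mul_sum, key m]
    _ = (1/2) * D j := by simp
  
/-- metricity of the connection -/
lemma metricity' {g : (ι → ℝ) → Matrix ι ι ℝ} (hgs : SymM g) (hgn : NondegM g)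
    (k i j : ι) (x : ι → ℝ) :
    (∑ l, christoffel g l k i x * g x l j) + (∑ l, christoffel g l k j x * g x i l)
      = pd k (fun y => g y i j) x := by
  have h1 := chris_g hgs hgn k i j x
  have h2 := chris_g hgs hgn k j i x
  have e1 : (∑ l, christoffel g l k j x * g x i l) = ∑ l, christoffel g l k j x * g x l i :=
    Finset.sum_congr rfl fun l _ => by rw [g_symm' hgs i l x]
  have e2 : pd k (fun y => g y j i) x = pd k (fun y => g y i j) x :=
    pd_congr' (fun y => g_symm' hgs j i y) k x
  have e3 : pd j (fun y => g y k i) x = pd j (fun y => g y i k) x :=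
    pd_congr' (fun y => g_symm' hgs k i y) j x
  have e4 : pd i (fun y => g y k j) x = pd i (fun y => g y j k) x :=
    pd_congr' (fun y => g_symm' hgs k j y) i x
  rw [e1, h1, h2, e2, e3, e4]
  ring

/-- derivative of the inverse metric -/
lemma pd_inv' {g : (ι → ℝ) → Matrix ι ι ℝ} (hg : SmoothM g) (hgn : NondegM g)
    (k a b : ι) (x : ι → ℝ) :
    pd k (fun y => (g y)⁻¹ a b) x
      = -∑ n, ∑ c, (g x)⁻¹ a n * pd k (fun y => g y n c) x * (g x)⁻¹ c b := by
  have hdg : ∀ m n, DifferentiableAt ℝ (fun y => g y m n) x :=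
    fun m n => ((hg m n).differentiable (by simp)).differentiableAt
  have hdinv : ∀ m n, DifferentiableAt ℝ (fun y => (g y)⁻¹ m n) x :=
    fun m n => diffAt_inv' hg hgn m n x
  have h1 : ∀ c, (∑ n, (pd k (fun y => (g y)⁻¹ a n) x * g x n c
      + (g x)⁻¹ a n * pd k (fun y => g y n c) x)) = 0 := by
    intro c
    have e1 : pd k (fun y => ∑ n, (g y)⁻¹ a n * g y n c) x
        = ∑ n, (pd k (fun y => (g y)⁻¹ a n) x * g x n c
            + (g x)⁻¹ a n * pd k (fun y => g y n c) x) := by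
      rw [pd_sum' k Finset.univ (fun n y => (g y)⁻¹ a n * g y n c) x
        (fun n _ => (hdinv a n).mul (hdg n c))]
      exact Finset.sum_congr rfl fun n _ => pd_mul' k x (hdinv a n) (hdg n c)
    rw [← e1, pd_congr' (f' := fun _ => if a = c then (1:ℝ) else 0)
      (fun y => sum_inv_g' hgn a c y) k x, pd_const']
  have h4 : ∀ c, (∑ n, pd k (fun y => (g y)⁻¹ a n) x * g x n c)
      = -∑ n, (g x)⁻¹ a n * pd k (fun y => g y n c) x := by
    intro c
    have h := h1 c
    rw [Finset.sum_add_distrib] at h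
    linarith
  have h3 : pd k (fun y => (g y)⁻¹ a b) x
      = ∑ c, (∑ n, pd k (fun y => (g y)⁻¹ a n) x * g x n c) * (g x)⁻¹ c b := by
    calc pd k (fun y => (g y)⁻¹ a b) x
        = ∑ n, pd k (fun y => (g y)⁻¹ a n) x * (if n = b then 1 else 0) := by simp
      _ = ∑ n, pd k (fun y => (g y)⁻¹ a n) x * (∑ c, g x n c * (g x)⁻¹ c b) := by
          exact Finset.sum_congr rfl fun n _ => by rw [sum_g_inv' hgn n b x]
      _ = ∑ n, ∑ c, pd k (fun y => (g y)⁻¹ a n) x * g x n c * (g x)⁻¹ c b := by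
          apply Finset.sum_congr rfl; intro n _
          rw [Finset.mul_sum]
          exact Finset.sum_congr rfl fun c _ => by ring
      _ = ∑ c, ∑ n, pd k (fun y => (g y)⁻¹ a n) x * g x n c * (g x)⁻¹ c b :=
          Finset.sum_comm
      _ = ∑ c, (∑ n, pd k (fun y => (g y)⁻¹ a n) x * g x n c) * (g x)⁻¹ c b := by
          exact Finset.sum_congr rfl fun c _ => by rw [Finset.sum_mul]
  rw [h3]
  calc ∑ c, (∑ n, pd k (fun y => (g y)⁻¹ a n) x * g x n c) * (g x)⁻¹ c b
      = ∑ c, (-∑ n, (g x)⁻¹ a n * pd k (fun y => g y n c) x) * (g x)⁻¹ c b :=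
        Finset.sum_congr rfl fun c _ => by rw [h4 c]
    _ = -∑ c, ∑ n, (g x)⁻¹ a n * pd k (fun y => g y n c) x * (g x)⁻¹ c b := by
        rw [← Finset.sum_neg_distrib]
        apply Finset.sum_congr rfl; intro c _
        rw [neg_mul, Finset.sum_mul]
    _ = -∑ n, ∑ c, (g x)⁻¹ a n * pd k (fun y => g y n c) x * (g x)⁻¹ c b := by
        rw [Finset.sum_comm]

/-- covariant constancy of the inverse metric -/
lemma pd_inv_chris' {g : (ι → ℝ) → Matrix ι ι ℝ} (hg : SmoothM g) (hgs : SymM g)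
    (hgn : NondegM g) (k a b : ι) (x : ι → ℝ) :
    pd k (fun y => (g y)⁻¹ a b) x
      = -(∑ m, (g x)⁻¹ a m * christoffel g b k m x)
        - ∑ m, christoffel g a k m x * (g x)⁻¹ m b := by
  rw [pd_inv' hg hgn k a b x]
  have met : ∀ n c, pd k (fun y => g y n c) x
      = (∑ l, christoffel g l k n x * g x l c) + ∑ l, christoffel g l k c x * g x n l :=
    fun n c => (metricity' hgs hgn k n c x).symm
  have expand : ∑ n, ∑ c, (g x)⁻¹ a n * pd k (fun y => g y n c) x * (g x)⁻¹ c b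
      = (∑ n, ∑ c, (g x)⁻¹ a n * (∑ l, christoffel g l k n x * g x l c) * (g x)⁻¹ c b)
        + ∑ n, ∑ c, (g x)⁻¹ a n * (∑ l, christoffel g l k c x * g x n l) * (g x)⁻¹ c b := by
    rw [← Finset.sum_add_distrib]
    apply Finset.sum_congr rfl; intro n _
    rw [← Finset.sum_add_distrib]
    apply Finset.sum_congr rfl; intro c _
    rw [met n c]; ring
  have T1 : (∑ n, ∑ c, (g x)⁻¹ a n * (∑ l, christoffel g l k n x * g x l c) * (g x)⁻¹ c b)
      = ∑ m, (g x)⁻¹ a m * christoffel g b k m x := by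
    calc ∑ n, ∑ c, (g x)⁻¹ a n * (∑ l, christoffel g l k n x * g x l c) * (g x)⁻¹ c b
        = ∑ n, ∑ c, ∑ l, ((g x)⁻¹ a n * christoffel g l k n x) * (g x l c * (g x)⁻¹ c b) := by
          apply Finset.sum_congr rfl; intro n _
          apply Finset.sum_congr rfl; intro c _
          rw [mul_comm ((g x)⁻¹ a n), Finset.sum_mul, Finset.sum_mul]
          exact Finset.sum_congr rfl fun l _ => by ring
      _ = ∑ n, ∑ l, ∑ c, ((g x)⁻¹ a n * christoffel g l k n x) * (g x l c * (g x)⁻¹ c b) :=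
          Finset.sum_congr rfl fun n _ => Finset.sum_comm
      _ = ∑ n, ∑ l, ((g x)⁻¹ a n * christoffel g l k n x) * (if l = b then 1 else 0) := by
          apply Finset.sum_congr rfl; intro n _
          apply Finset.sum_congr rfl; intro l _
          rw [← Finset.mul_sum, sum_g_inv' hgn l b x]
      _ = ∑ n, (g x)⁻¹ a n * christoffel g b k n x := by simp
  have T2 : (∑ n, ∑ c, (g x)⁻¹ a n * (∑ l, christoffel g l k c x * g x n l) * (g x)⁻¹ c b)
      = ∑ m, christoffel g a k m x * (g x)⁻¹ m b := by
    calc ∑ n, ∑ c, (g x)⁻¹ a n * (∑ l, christoffel g l k c x * g x n l) * (g x)⁻¹ c b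
        = ∑ c, ∑ n, ∑ l, (christoffel g l k c x * (g x)⁻¹ c b) * ((g x)⁻¹ a n * g x n l) := by
          rw [Finset.sum_comm]
          apply Finset.sum_congr rfl; intro c _
          apply Finset.sum_congr rfl; intro n _
          rw [mul_comm ((g x)⁻¹ a n), Finset.sum_mul, Finset.sum_mul]
          exact Finset.sum_congr rfl fun l _ => by ring
      _ = ∑ c, ∑ l, ∑ n, (christoffel g l k c x * (g x)⁻¹ c b) * ((g x)⁻¹ a n * g x n l) :=
          Finset.sum_congr rfl fun c _ => Finset.sum_comm
      _ = ∑ c, ∑ l, (christoffel g l k c x * (g x)⁻¹ c b) * (if a = l then 1 else 0) := by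
          apply Finset.sum_congr rfl; intro c _
          apply Finset.sum_congr rfl; intro l _
          rw [← Finset.mul_sum, sum_inv_g' hgn a l x]
      _ = ∑ c, christoffel g a k c x * (g x)⁻¹ c b := by simp
  rw [expand, T1, T2]
  ring

end AuxForStatement0

/-- if a symmetric (0,2)-tensor `L` satisfies `∇_X L = X^♭ ⊙ Λ`, then
`Λ = dλ` with `λ = (1/2)·trace(L^♯)` (here `trace(L^♯) = Σ (g⁻¹)ᵃᵇ L_{ab}`). -/
theorem statement_0 {ι : Type} [Fintype ι] [DecidableEq ι]
    (g L : (ι → ℝ) → Matrix ι ι ℝ) (Λ : (ι → ℝ) → ι → ℝ)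
    (hg : SmoothM g) (hgs : SymM g) (hgn : NondegM g)
    (hL : SmoothM L) (hLs : SymM L)
    (hproj : ProjEqn g L Λ) :
    ∀ (i : ι) (x : ι → ℝ),
      Λ x i = pd i (fun y => (1 / 2) * ∑ a, ∑ b, (g y)⁻¹ a b * L y a b) x := by
  intro i x
  have hdg : ∀ a b (z : ι → ℝ), DifferentiableAt ℝ (fun y => g y a b) z :=
    fun a b z => ((hg a b).differentiable (by simp)).differentiableAt
  have hdL : ∀ a b (z : ι → ℝ), DifferentiableAt ℝ (fun y => L y a b) z :=
    fun a b z => ((hL a b).differentiable (by simp)).differentiableAt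
  have hdinv : ∀ a b (z : ι → ℝ), DifferentiableAt ℝ (fun y => (g y)⁻¹ a b) z :=
    fun a b z => diffAt_inv' hg hgn a b z
  have hdiffprod : ∀ a b (z : ι → ℝ), DifferentiableAt ℝ (fun y => (g y)⁻¹ a b * L y a b) z :=
    fun a b z => (hdinv a b z).mul (hdL a b z)
  have hdiffinner : ∀ a (z : ι → ℝ), DifferentiableAt ℝ (fun y => ∑ b, (g y)⁻¹ a b * L y a b) z :=
    fun a z => DifferentiableAt.fun_sum (fun b _ => hdiffprod a b z)
  have expand : pd i (fun y => (1 / 2) * ∑ a, ∑ b, (g y)⁻¹ a b * L y a b) x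
      = (1/2) * ∑ a, ∑ b, (pd i (fun y => (g y)⁻¹ a b) x * L x a b
          + (g x)⁻¹ a b * pd i (fun y => L y a b) x) := by
    rw [pd_const_mul' i x (1/2) (DifferentiableAt.fun_sum fun a _ => hdiffinner a x)]
    rw [pd_sum' i Finset.univ (fun a y => ∑ b, (g y)⁻¹ a b * L y a b) x
      (fun a _ => hdiffinner a x)]
    congr 1
    apply Finset.sum_congr rfl; intro a _
    rw [pd_sum' i Finset.univ (fun b y => (g y)⁻¹ a b * L y a b) x
      (fun b _ => hdiffprod a b x)]
    exact Finset.sum_congr rfl fun b _ => pd_mul' i x (hdinv a b x) (hdL a b x)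
  rw [expand]
  have epdL : ∀ a b, pd i (fun y => L y a b) x
      = g x i a * Λ x b + g x i b * Λ x a
        + ((∑ l, christoffel g l i a x * L x l b) + ∑ l, christoffel g l i b x * L x a l) := by
    intro a b
    have h := hproj i a b x
    unfold covDer2 at h
    linarith
  have epdInv : ∀ a b, pd i (fun y => (g y)⁻¹ a b) x
      = -(∑ m, (g x)⁻¹ a m * christoffel g b i m x)
        - ∑ m, christoffel g a i m x * (g x)⁻¹ m b :=
    fun a b => pd_inv_chris' hg hgs hgn i a b x
  have c3 : (∑ a, ∑ b, (g x)⁻¹ a b * (g x i a * Λ x b)) = Λ x i := by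
    rw [Finset.sum_comm]
    calc ∑ b, ∑ a, (g x)⁻¹ a b * (g x i a * Λ x b)
        = ∑ b, (∑ a, g x i a * (g x)⁻¹ a b) * Λ x b := by
          apply Finset.sum_congr rfl; intro b _
          rw [Finset.sum_mul]
          exact Finset.sum_congr rfl fun a _ => by ring
      _ = ∑ b, (if i = b then 1 else 0) * Λ x b :=
          Finset.sum_congr rfl fun b _ => by rw [sum_g_inv' hgn i b x]
      _ = Λ x i := by simp
  have c4 : (∑ a, ∑ b, (g x)⁻¹ a b * (g x i b * Λ x a)) = Λ x i := by
    calc ∑ a, ∑ b, (g x)⁻¹ a b * (g x i b * Λ x a)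
        = ∑ a, (∑ b, g x i b * (g x)⁻¹ b a) * Λ x a := by
          apply Finset.sum_congr rfl; intro a _
          rw [Finset.sum_mul]
          apply Finset.sum_congr rfl; intro b _
          rw [inv_symm' hgs a b x]; ring
      _ = ∑ a, (if i = a then 1 else 0) * Λ x a :=
          Finset.sum_congr rfl fun a _ => by rw [sum_g_inv' hgn i a x]
      _ = Λ x i := by simp
  have c51 : (∑ a, ∑ b, (g x)⁻¹ a b * (∑ l, christoffel g l i a x * L x l b))
      = ∑ a, ∑ b, (∑ m, christoffel g a i m x * (g x)⁻¹ m b) * L x a b := by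
    calc ∑ a, ∑ b, (g x)⁻¹ a b * (∑ l, christoffel g l i a x * L x l b)
        = ∑ a, ∑ b, ∑ l, christoffel g l i a x * ((g x)⁻¹ a b * L x l b) := by
          apply Finset.sum_congr rfl; intro a _
          apply Finset.sum_congr rfl; intro b _
          rw [Finset.mul_sum]
          exact Finset.sum_congr rfl fun l _ => by ring
      _ = ∑ a, ∑ l, ∑ b, christoffel g l i a x * ((g x)⁻¹ a b * L x l b) :=
          Finset.sum_congr rfl fun a _ => Finset.sum_comm
      _ = ∑ l, ∑ a, ∑ b, christoffel g l i a x * ((g x)⁻¹ a b * L x l b) := Finset.sum_comm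
      _ = ∑ a, ∑ m, ∑ b, christoffel g a i m x * ((g x)⁻¹ m b * L x a b) := rfl
      _ = ∑ a, ∑ b, ∑ m, christoffel g a i m x * ((g x)⁻¹ m b * L x a b) :=
          Finset.sum_congr rfl fun a _ => Finset.sum_comm
      _ = ∑ a, ∑ b, (∑ m, christoffel g a i m x * (g x)⁻¹ m b) * L x a b := by
          apply Finset.sum_congr rfl; intro a _
          apply Finset.sum_congr rfl; intro b _
          rw [Finset.sum_mul]
          exact Finset.sum_congr rfl fun m _ => by ring
  have c62 : (∑ a, ∑ b, (g x)⁻¹ a b * (∑ l, christoffel g l i b x * L x a l))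
      = ∑ a, ∑ b, (∑ m, (g x)⁻¹ a m * christoffel g b i m x) * L x a b := by
    calc ∑ a, ∑ b, (g x)⁻¹ a b * (∑ l, christoffel g l i b x * L x a l)
        = ∑ a, ∑ b, ∑ l, christoffel g l i b x * ((g x)⁻¹ a b * L x a l) := by
          apply Finset.sum_congr rfl; intro a _
          apply Finset.sum_congr rfl; intro b _
          rw [Finset.mul_sum]
          exact Finset.sum_congr rfl fun l _ => by ring
      _ = ∑ a, ∑ l, ∑ b, christoffel g l i b x * ((g x)⁻¹ a b * L x a l) :=
          Finset.sum_congr rfl fun a _ => Finset.sum_comm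
      _ = ∑ a, ∑ b, ∑ m, christoffel g b i m x * ((g x)⁻¹ a m * L x a b) := rfl
      _ = ∑ a, ∑ b, (∑ m, (g x)⁻¹ a m * christoffel g b i m x) * L x a b := by
          apply Finset.sum_congr rfl; intro a _
          apply Finset.sum_congr rfl; intro b _
          rw [Finset.sum_mul]
          exact Finset.sum_congr rfl fun m _ => by ring
  have perterm : ∀ a b, pd i (fun y => (g y)⁻¹ a b) x * L x a b
      + (g x)⁻¹ a b * pd i (fun y => L y a b) x
      = (g x)⁻¹ a b * (g x i a * Λ x b)
        + (g x)⁻¹ a b * (g x i b * Λ x a)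
        + ((g x)⁻¹ a b * (∑ l, christoffel g l i a x * L x l b)
          - (∑ m, christoffel g a i m x * (g x)⁻¹ m b) * L x a b)
        + ((g x)⁻¹ a b * (∑ l, christoffel g l i b x * L x a l)
          - (∑ m, (g x)⁻¹ a m * christoffel g b i m x) * L x a b) := by
    intro a b
    rw [epdL a b, epdInv a b]
    ring
  have assemble : (∑ a, ∑ b, (pd i (fun y => (g y)⁻¹ a b) x * L x a b
      + (g x)⁻¹ a b * pd i (fun y => L y a b) x)) = 2 * Λ x i := by
    simp only [perterm]
    simp only [Finset.sum_add_distrib, Finset.sum_sub_distrib]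
    rw [c3, c4, c51, c62]
    ring
  rw [assemble]
  ring
end

section
/- Let (M̂, ĝ) be a pseudo-Riemannian manifold admitting a vector field ξ with ∇̂ξ = Id (a local cone with cone vector field ξ). Suppose (M̂, ĝ) is a direct product (M₁,g₁) × (M₂,g₂) of pseudo-Riemannian manifolds. Then both (M₁,g₁) and (M₂,g₂) admit vector fields ξ₁, ξ₂ with ∇^i ξᵢ = Id_{TMᵢ}, and ξ = ξ₁ + ξ₂. Conversely, if each factor admits such a vector field, so does the product. -/
open Real Matrix Finset

/-! Coordinate framework for pseudo-Riemannian geometry on `ℝ^ι`: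
metrics are matrix-valued functions, and the Levi-Civita connection is given by
the Christoffel symbols. -/

variable {ι : Type} [Fintype ι] [DecidableEq ι]

/-- The direct product metric `g₁ + g₂` on `M₁ × M₂`, in block-diagonal coordinates. -/
noncomputable def prodMetric {ι₁ ι₂ : Type} [Fintype ι₁] [DecidableEq ι₁]
    [Fintype ι₂] [DecidableEq ι₂]
    (g₁ : (ι₁ → ℝ) → Matrix ι₁ ι₁ ℝ) (g₂ : (ι₂ → ℝ) → Matrix ι₂ ι₂ ℝ)
    (x : (ι₁ ⊕ ι₂) → ℝ) : Matrix (ι₁ ⊕ ι₂) (ι₁ ⊕ ι₂) ℝ :=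
  Matrix.fromBlocks (g₁ (x ∘ Sum.inl)) 0 0 (g₂ (x ∘ Sum.inr))

section Helpers

lemma fderiv_pi_eq_sum (f : (ι → ℝ) → ℝ) (x v : ι → ℝ) :
    fderiv ℝ f x v = ∑ s, v s * pd s f x := by
  have hv : v = ∑ s, v s • (Pi.single s (1:ℝ) : ι → ℝ) := by
    conv_lhs => rw [← Finset.univ_sum_single v]
    congr 1; funext s
    rw [← Pi.single_smul]; simp
  conv_lhs => rw [hv, map_sum]
  simp [pd, smul_eq_mul]

section Generic
variable {κ : Type} [Fintype κ] [DecidableEq κ]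
variable {u : κ → ι} {L : ((ι → ℝ)) →L[ℝ] (κ → ℝ)} {E : ((κ → ℝ)) →L[ℝ] (ι → ℝ)}

lemma gen_diff_iff (hL : ∀ y a, L y a = y (u a)) (hE : ∀ z a, E z (u a) = z a)
    (f : (κ → ℝ) → ℝ) (x : ι → ℝ) :
    DifferentiableAt ℝ (fun y => f (L y)) x ↔ DifferentiableAt ℝ f (L x) := by
  constructor
  · intro h
    have hA : ∀ z : κ → ℝ, L (E z + (x - E (L x))) = z := by
      intro z; funext a
      rw [hL]
      simp only [Pi.add_apply, Pi.sub_apply, hE]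
      rw [hL]; ring
    have hfa : f = (fun y => f (L y)) ∘ (fun z => E z + (x - E (L x))) := by
      funext z; simp [hA]
    have hAd : DifferentiableAt ℝ (fun z : κ → ℝ => E z + (x - E (L x))) (L x) :=
      (E.differentiable.differentiableAt).add_const _
    have hAx : E (L x) + (x - E (L x)) = x := by abel
    have h' : DifferentiableAt ℝ (fun y => f (L y)) (E (L x) + (x - E (L x))) := by
      rw [hAx]; exact h
    rw [hfa]; exact DifferentiableAt.comp (𝕜 := ℝ) (L x) h' hAd
  · intro h
    exact h.comp x L.differentiableAt

lemma gen_pd_comp (hu : Function.Injective u) (hL : ∀ y a, L y a = y (u a))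
    (hE : ∀ z a, E z (u a) = z a) (f : (κ → ℝ) → ℝ) (i : κ) (x : ι → ℝ) :
    pd (u i) (fun y => f (L y)) x = pd i f (L x) := by
  by_cases hd : DifferentiableAt ℝ f (L x)
  · have h1 : HasFDerivAt (fun y => f (L y)) ((fderiv ℝ f (L x)).comp L) x :=
      (hd.hasFDerivAt).comp x L.hasFDerivAt
    have h2 : L (Pi.single (u i) 1) = Pi.single i 1 := by
      funext a
      simp [hL, Pi.single_apply, hu.eq_iff]
    simp [pd, h1.fderiv, h2]
  · have hd' : ¬ DifferentiableAt ℝ (fun y => f (L y)) x := by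
      rw [gen_diff_iff hL hE]; exact hd
    simp [pd, fderiv_zero_of_not_differentiableAt hd, fderiv_zero_of_not_differentiableAt hd']

lemma gen_pd_comp_zero (hL : ∀ y a, L y a = y (u a)) (hE : ∀ z a, E z (u a) = z a)
    (f : (κ → ℝ) → ℝ) {s : ι} (hs : ∀ a, u a ≠ s) (x : ι → ℝ) :
    pd s (fun y => f (L y)) x = 0 := by
  by_cases hd : DifferentiableAt ℝ f (L x)
  · have h1 : HasFDerivAt (fun y => f (L y)) ((fderiv ℝ f (L x)).comp L) x :=
      (hd.hasFDerivAt).comp x L.hasFDerivAt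
    have h2 : L (Pi.single s 1) = 0 := by
      funext a
      rw [hL]
      simp [Pi.single_apply, Ne.symm (hs a)]
    simp [pd, h1.fderiv, h2]
  · have hd' : ¬ DifferentiableAt ℝ (fun y => f (L y)) x := by
      rw [gen_diff_iff hL hE]; exact hd
    simp [pd, fderiv_zero_of_not_differentiableAt hd']

lemma gen_const (hL : ∀ y a, L y a = y (u a))
    {f : (ι → ℝ) → ℝ} (hf : Differentiable ℝ f)
    (h0 : ∀ (s : ι), (∀ a, u a ≠ s) → ∀ y, pd s f y = 0)
    (x x' : ι → ℝ) (hxx : L x = L x') : f x = f x' := by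
  have key : ∀ t : ℝ, HasDerivAt (fun t : ℝ => f (x + t • (x' - x))) 0 t := by
    intro t
    have hline : HasDerivAt (fun t : ℝ => x + t • (x' - x)) (x' - x) t := by
      simpa using ((hasDerivAt_id t).smul_const (x' - x)).const_add x
    have := ((hf (x + t • (x' - x))).hasFDerivAt).comp_hasDerivAt t hline
    have hz : fderiv ℝ f (x + t • (x' - x)) (x' - x) = 0 := by
      rw [fderiv_pi_eq_sum]
      apply Finset.sum_eq_zero
      intro s _
      by_cases hr : ∃ a, u a = s
      · obtain ⟨a, rfl⟩ := hr
        have : x' (u a) - x (u a) = 0 := by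
          have h1 := congrFun hxx a
          rw [hL, hL] at h1
          linarith
        simp [this]
      · push_neg at hr
        rw [h0 s hr]
        ring
    rwa [hz] at this
  have hc := is_const_of_deriv_eq_zero (f := fun t : ℝ => f (x + t • (x' - x)))
    (fun t => (key t).differentiableAt) (fun t => (key t).deriv) 0 1
  simpa using hc

end Generic

section ProdHelpers
variable {ι₁ ι₂ : Type} [Fintype ι₁] [DecidableEq ι₁] [Fintype ι₂] [DecidableEq ι₂]

/-- restriction to the first block, as a continuous linear map -/
noncomputable def L1 : (((ι₁ ⊕ ι₂) → ℝ)) →L[ℝ] (ι₁ → ℝ) :=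
  ContinuousLinearMap.pi fun i => ContinuousLinearMap.proj (Sum.inl i)

noncomputable def E1 : ((ι₁ → ℝ)) →L[ℝ] ((ι₁ ⊕ ι₂) → ℝ) :=
  ContinuousLinearMap.pi fun s =>
    Sum.elim (fun i => ContinuousLinearMap.proj i) (fun _ => 0) s

noncomputable def L2 : (((ι₁ ⊕ ι₂) → ℝ)) →L[ℝ] (ι₂ → ℝ) :=
  ContinuousLinearMap.pi fun j => ContinuousLinearMap.proj (Sum.inr j)

noncomputable def E2 : ((ι₂ → ℝ)) →L[ℝ] ((ι₁ ⊕ ι₂) → ℝ) :=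
  ContinuousLinearMap.pi fun s =>
    Sum.elim (fun _ => 0) (fun j => ContinuousLinearMap.proj j) s

lemma hL1 : ∀ (y : (ι₁ ⊕ ι₂) → ℝ) (a : ι₁), (L1 y : ι₁ → ℝ) a = y (Sum.inl a) :=
  fun _ _ => rfl

lemma hE1 : ∀ (z : ι₁ → ℝ) (a : ι₁), (E1 (ι₂ := ι₂) z) (Sum.inl a) = z a := fun _ _ => rfl

lemma hL2 : ∀ (y : (ι₁ ⊕ ι₂) → ℝ) (a : ι₂), (L2 y : ι₂ → ℝ) a = y (Sum.inr a) :=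
  fun _ _ => rfl

lemma hE2 : ∀ (z : ι₂ → ℝ) (a : ι₂), (E2 (ι₁ := ι₁) z) (Sum.inr a) = z a := fun _ _ => rfl

lemma pd_inl_comp (f : (ι₁ → ℝ) → ℝ) (i : ι₁) (x : (ι₁ ⊕ ι₂) → ℝ) :
    pd (Sum.inl i) (fun y => f (y ∘ Sum.inl)) x = pd i f (x ∘ Sum.inl) :=
  gen_pd_comp Sum.inl_injective hL1 hE1 f i x

lemma pd_inr_comp (f : (ι₂ → ℝ) → ℝ) (j : ι₂) (x : (ι₁ ⊕ ι₂) → ℝ) :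
    pd (Sum.inr j) (fun y => f (y ∘ Sum.inr)) x = pd j f (x ∘ Sum.inr) :=
  gen_pd_comp Sum.inr_injective hL2 hE2 f j x

lemma pd_inr_of_inl (f : (ι₁ → ℝ) → ℝ) (j : ι₂) (x : (ι₁ ⊕ ι₂) → ℝ) :
    pd (Sum.inr j) (fun y => f (y ∘ Sum.inl)) x = 0 :=
  gen_pd_comp_zero hL1 hE1 f (fun a => Sum.inl_ne_inr) x

lemma pd_inl_of_inr (f : (ι₂ → ℝ) → ℝ) (i : ι₁) (x : (ι₁ ⊕ ι₂) → ℝ) :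
    pd (Sum.inl i) (fun y => f (y ∘ Sum.inr)) x = 0 :=
  gen_pd_comp_zero hL2 hE2 f (fun a => Sum.inr_ne_inl) x

variable (g₁ : (ι₁ → ℝ) → Matrix ι₁ ι₁ ℝ) (g₂ : (ι₂ → ℝ) → Matrix ι₂ ι₂ ℝ)

lemma pdP_l_11 (i a b : ι₁) (x : (ι₁ ⊕ ι₂) → ℝ) :
    pd (Sum.inl i) (fun y => prodMetric g₁ g₂ y (Sum.inl a) (Sum.inl b)) x
      = pd i (fun z => g₁ z a b) (x ∘ Sum.inl) := by
  simpa only [prodMetric, Matrix.fromBlocks_apply₁₁] using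
    pd_inl_comp (fun z => g₁ z a b) i x

lemma pdP_r_11 (j : ι₂) (a b : ι₁) (x : (ι₁ ⊕ ι₂) → ℝ) :
    pd (Sum.inr j) (fun y => prodMetric g₁ g₂ y (Sum.inl a) (Sum.inl b)) x = 0 := by
  simpa only [prodMetric, Matrix.fromBlocks_apply₁₁] using
    pd_inr_of_inl (fun z => g₁ z a b) j x

lemma pdP_r_22 (j a b : ι₂) (x : (ι₁ ⊕ ι₂) → ℝ) :
    pd (Sum.inr j) (fun y => prodMetric g₁ g₂ y (Sum.inr a) (Sum.inr b)) x
      = pd j (fun z => g₂ z a b) (x ∘ Sum.inr) := by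
  simpa only [prodMetric, Matrix.fromBlocks_apply₂₂] using
    pd_inr_comp (fun z => g₂ z a b) j x

lemma pdP_l_22 (i : ι₁) (a b : ι₂) (x : (ι₁ ⊕ ι₂) → ℝ) :
    pd (Sum.inl i) (fun y => prodMetric g₁ g₂ y (Sum.inr a) (Sum.inr b)) x = 0 := by
  simpa only [prodMetric, Matrix.fromBlocks_apply₂₂] using
    pd_inl_of_inr (fun z => g₂ z a b) i x

lemma pdP_12 (s : ι₁ ⊕ ι₂) (a : ι₁) (b : ι₂) (x : (ι₁ ⊕ ι₂) → ℝ) :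
    pd s (fun y => prodMetric g₁ g₂ y (Sum.inl a) (Sum.inr b)) x = 0 := by
  simp [prodMetric, pd]

lemma pdP_21 (s : ι₁ ⊕ ι₂) (a : ι₂) (b : ι₁) (x : (ι₁ ⊕ ι₂) → ℝ) :
    pd s (fun y => prodMetric g₁ g₂ y (Sum.inr a) (Sum.inl b)) x = 0 := by
  simp [prodMetric, pd]

variable {g₁ g₂}

lemma inv_prod (hg₁n : NondegM g₁) (hg₂n : NondegM g₂) (x : (ι₁ ⊕ ι₂) → ℝ) :
    (prodMetric g₁ g₂ x)⁻¹
      = Matrix.fromBlocks (g₁ (x ∘ Sum.inl))⁻¹ 0 0 (g₂ (x ∘ Sum.inr))⁻¹ := by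
  apply Matrix.inv_eq_right_inv
  rw [prodMetric, Matrix.fromBlocks_multiply]
  rw [Matrix.mul_nonsing_inv _ (isUnit_iff_ne_zero.2 (hg₁n _)),
      Matrix.mul_nonsing_inv _ (isUnit_iff_ne_zero.2 (hg₂n _))]
  simp [Matrix.fromBlocks_one]

lemma chr_lll (hg₁n : NondegM g₁) (hg₂n : NondegM g₂) (k i j : ι₁) (x : (ι₁ ⊕ ι₂) → ℝ) :
    christoffel (prodMetric g₁ g₂) (Sum.inl k) (Sum.inl i) (Sum.inl j) x
      = christoffel g₁ k i j (x ∘ Sum.inl) := by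
  rw [christoffel, christoffel, inv_prod hg₁n hg₂n, Fintype.sum_sum_type]
  simp only [Matrix.fromBlocks_apply₁₁, Matrix.fromBlocks_apply₁₂, Matrix.zero_apply,
    zero_mul, Finset.sum_const_zero, add_zero, pdP_l_11]

lemma chr_rrr (hg₁n : NondegM g₁) (hg₂n : NondegM g₂) (k i j : ι₂) (x : (ι₁ ⊕ ι₂) → ℝ) :
    christoffel (prodMetric g₁ g₂) (Sum.inr k) (Sum.inr i) (Sum.inr j) x
      = christoffel g₂ k i j (x ∘ Sum.inr) := by
  rw [christoffel, christoffel, inv_prod hg₁n hg₂n, Fintype.sum_sum_type]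
  simp only [Matrix.fromBlocks_apply₂₂, Matrix.fromBlocks_apply₂₁, Matrix.zero_apply,
    zero_mul, Finset.sum_const_zero, zero_add, pdP_r_22]

lemma chr_l_zero₁ (hg₁n : NondegM g₁) (hg₂n : NondegM g₂) (k : ι₁) (i : ι₂)
    (j : ι₁ ⊕ ι₂) (x : (ι₁ ⊕ ι₂) → ℝ) :
    christoffel (prodMetric g₁ g₂) (Sum.inl k) (Sum.inr i) j x = 0 := by
  rw [christoffel, inv_prod hg₁n hg₂n, Fintype.sum_sum_type]
  cases j with
  | inl j =>
    simp [Matrix.fromBlocks_apply₁₁, Matrix.fromBlocks_apply₁₂,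
      pdP_21, pdP_12, pdP_r_11]
  | inr j =>
    simp [Matrix.fromBlocks_apply₁₁, Matrix.fromBlocks_apply₁₂,
      pdP_21, pdP_12, pdP_l_22]

lemma chr_l_zero₂ (hg₁n : NondegM g₁) (hg₂n : NondegM g₂) (k : ι₁)
    (i : ι₁ ⊕ ι₂) (j : ι₂) (x : (ι₁ ⊕ ι₂) → ℝ) :
    christoffel (prodMetric g₁ g₂) (Sum.inl k) i (Sum.inr j) x = 0 := by
  cases i with
  | inl i =>
    rw [christoffel, inv_prod hg₁n hg₂n, Fintype.sum_sum_type]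
    simp [Matrix.fromBlocks_apply₁₁, Matrix.fromBlocks_apply₁₂,
      pdP_21, pdP_12, pdP_r_11]
  | inr i => exact chr_l_zero₁ hg₁n hg₂n k i _ x

lemma chr_r_zero₁ (hg₁n : NondegM g₁) (hg₂n : NondegM g₂) (k : ι₂) (i : ι₁)
    (j : ι₁ ⊕ ι₂) (x : (ι₁ ⊕ ι₂) → ℝ) :
    christoffel (prodMetric g₁ g₂) (Sum.inr k) (Sum.inl i) j x = 0 := by
  rw [christoffel, inv_prod hg₁n hg₂n, Fintype.sum_sum_type]
  cases j with
  | inl j =>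
    simp [Matrix.fromBlocks_apply₂₁, Matrix.fromBlocks_apply₂₂,
      pdP_21, pdP_12, pdP_r_11]
  | inr j =>
    simp [Matrix.fromBlocks_apply₂₁, Matrix.fromBlocks_apply₂₂,
      pdP_21, pdP_12, pdP_l_22]

lemma chr_r_zero₂ (hg₁n : NondegM g₁) (hg₂n : NondegM g₂) (k : ι₂)
    (i : ι₁ ⊕ ι₂) (j : ι₁) (x : (ι₁ ⊕ ι₂) → ℝ) :
    christoffel (prodMetric g₁ g₂) (Sum.inr k) i (Sum.inl j) x = 0 := by
  cases i with
  | inl i => exact chr_r_zero₁ hg₁n hg₂n k i _ x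
  | inr i =>
    rw [christoffel, inv_prod hg₁n hg₂n, Fintype.sum_sum_type]
    simp [Matrix.fromBlocks_apply₂₁, Matrix.fromBlocks_apply₂₂,
      pdP_21, pdP_12, pdP_l_22]

end ProdHelpers

end Helpers

/-- a direct product `(M₁,g₁) × (M₂,g₂)` is a local cone (admits `ξ` with
`∇̂ξ = Id`) iff both factors are local cones; the cone vector fields are related by
`ξ = ξ₁ + ξ₂`. -/
theorem statement_3 {ι₁ ι₂ : Type} [Fintype ι₁] [DecidableEq ι₁]
    [Fintype ι₂] [DecidableEq ι₂]
    (g₁ : (ι₁ → ℝ) → Matrix ι₁ ι₁ ℝ) (g₂ : (ι₂ → ℝ) → Matrix ι₂ ι₂ ℝ)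
    (hg₁ : SmoothM g₁) (hg₁s : SymM g₁) (hg₁n : NondegM g₁)
    (hg₂ : SmoothM g₂) (hg₂s : SymM g₂) (hg₂n : NondegM g₂) :
    (∀ ξ : ((ι₁ ⊕ ι₂) → ℝ) → (ι₁ ⊕ ι₂) → ℝ,
      (∀ l, ContDiff ℝ (⊤ : ℕ∞) fun x => ξ x l) →
      IsConeVF (prodMetric g₁ g₂) ξ →
      ∃ (ξ₁ : (ι₁ → ℝ) → ι₁ → ℝ) (ξ₂ : (ι₂ → ℝ) → ι₂ → ℝ),
        IsConeVF g₁ ξ₁ ∧ IsConeVF g₂ ξ₂ ∧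
        ∀ x : (ι₁ ⊕ ι₂) → ℝ,
          (∀ i, ξ x (Sum.inl i) = ξ₁ (x ∘ Sum.inl) i) ∧
          (∀ j, ξ x (Sum.inr j) = ξ₂ (x ∘ Sum.inr) j)) ∧
    (∀ (ξ₁ : (ι₁ → ℝ) → ι₁ → ℝ) (ξ₂ : (ι₂ → ℝ) → ι₂ → ℝ),
      IsConeVF g₁ ξ₁ → IsConeVF g₂ ξ₂ →
      IsConeVF (prodMetric g₁ g₂)
        (fun x => Sum.elim (ξ₁ (x ∘ Sum.inl)) (ξ₂ (x ∘ Sum.inr)))) := by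
  constructor
  · intro ξ hξsm hξ
    have step1l : ∀ (j : ι₂) (i : ι₁) (x : (ι₁ ⊕ ι₂) → ℝ),
        pd (Sum.inr j) (fun y => ξ y (Sum.inl i)) x = 0 := by
      intro j i x
      have h := hξ (Sum.inr j) (Sum.inl i) x
      rw [covDerVF] at h
      simp only [chr_l_zero₁ hg₁n hg₂n, zero_mul, Finset.sum_const_zero, add_zero,
        reduceCtorEq, if_false] at h
      exact h
    have step1r : ∀ (i : ι₁) (j : ι₂) (x : (ι₁ ⊕ ι₂) → ℝ),
        pd (Sum.inl i) (fun y => ξ y (Sum.inr j)) x = 0 := by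
      intro i j x
      have h := hξ (Sum.inl i) (Sum.inr j) x
      rw [covDerVF] at h
      simp only [chr_r_zero₁ hg₁n hg₂n, zero_mul, Finset.sum_const_zero, add_zero,
        reduceCtorEq, if_false] at h
      exact h
    have hconstl : ∀ (i : ι₁) (x x' : (ι₁ ⊕ ι₂) → ℝ), x ∘ Sum.inl = x' ∘ Sum.inl →
        ξ x (Sum.inl i) = ξ x' (Sum.inl i) := by
      intro i x x' hxx
      refine gen_const hL1 (f := fun y => ξ y (Sum.inl i))
        ((hξsm (Sum.inl i)).differentiable (by simp)) ?_ x x' ?_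
      · intro s hs y
        cases s with
        | inl a => exact absurd rfl (hs a)
        | inr j => exact step1l j i y
      · funext a; exact congrFun hxx a
    have hconstr : ∀ (j : ι₂) (x x' : (ι₁ ⊕ ι₂) → ℝ), x ∘ Sum.inr = x' ∘ Sum.inr →
        ξ x (Sum.inr j) = ξ x' (Sum.inr j) := by
      intro j x x' hxx
      refine gen_const hL2 (f := fun y => ξ y (Sum.inr j))
        ((hξsm (Sum.inr j)).differentiable (by simp)) ?_ x x' ?_
      · intro s hs y
        cases s with
        | inl i => exact step1r i j y
        | inr a => exact absurd rfl (hs a)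
      · funext a; exact congrFun hxx a
    have hcompl : ∀ (x : (ι₁ ⊕ ι₂) → ℝ) (i : ι₁),
        ξ x (Sum.inl i) = ξ (Sum.elim (x ∘ Sum.inl) 0) (Sum.inl i) :=
      fun x i => hconstl i x _ (by funext a; rfl)
    have hcompr : ∀ (x : (ι₁ ⊕ ι₂) → ℝ) (j : ι₂),
        ξ x (Sum.inr j) = ξ (Sum.elim 0 (x ∘ Sum.inr)) (Sum.inr j) :=
      fun x j => hconstr j x _ (by funext a; rfl)
    refine ⟨fun z i => ξ (Sum.elim z 0) (Sum.inl i),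
            fun z j => ξ (Sum.elim 0 z) (Sum.inr j), ?_, ?_, ?_⟩
    · intro k l z
      have hx : (Sum.elim z (0 : ι₂ → ℝ)) ∘ Sum.inl = z := funext fun a => rfl
      have h := hξ (Sum.inl k) (Sum.inl l) (Sum.elim z 0)
      rw [covDerVF, Fintype.sum_sum_type] at h
      have hfun : (fun y => ξ y (Sum.inl l))
          = fun y : (ι₁ ⊕ ι₂) → ℝ => (fun z' => ξ (Sum.elim z' 0) (Sum.inl l)) (y ∘ Sum.inl) := by
        funext y; exact hcompl y l
      rw [hfun] at h
      beta_reduce at h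
      have hpd := pd_inl_comp (ι₂ := ι₂) (fun z' => ξ (Sum.elim z' 0) (Sum.inl l)) k (Sum.elim z 0)
      beta_reduce at hpd
      rw [hpd] at h
      simp only [chr_lll hg₁n hg₂n, chr_l_zero₂ hg₁n hg₂n, zero_mul,
        Finset.sum_const_zero, add_zero, hx, Sum.inl.injEq] at h
      rw [covDerVF]
      have hcomp' : ∀ m, ξ (Sum.elim z (0 : ι₂ → ℝ)) (Sum.inl m)
          = ξ (Sum.elim z 0) (Sum.inl m) := fun m => rfl
      simpa using h
    · intro k l z
      have hx : (Sum.elim (0 : ι₁ → ℝ) z) ∘ Sum.inr = z := funext fun a => rfl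
      have h := hξ (Sum.inr k) (Sum.inr l) (Sum.elim 0 z)
      rw [covDerVF, Fintype.sum_sum_type] at h
      have hfun : (fun y => ξ y (Sum.inr l))
          = fun y : (ι₁ ⊕ ι₂) → ℝ => (fun z' => ξ (Sum.elim 0 z') (Sum.inr l)) (y ∘ Sum.inr) := by
        funext y; exact hcompr y l
      rw [hfun] at h
      beta_reduce at h
      have hpd := pd_inr_comp (ι₁ := ι₁) (fun z' => ξ (Sum.elim 0 z') (Sum.inr l)) k (Sum.elim 0 z)
      beta_reduce at hpd
      rw [hpd] at h
      simp only [chr_rrr hg₁n hg₂n, chr_r_zero₂ hg₁n hg₂n, zero_mul,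
        Finset.sum_const_zero, zero_add, hx, Sum.inr.injEq] at h
      rw [covDerVF]
      simpa using h
    · intro x
      exact ⟨fun i => hcompl x i, fun j => hcompr x j⟩
  · intro ξ₁ ξ₂ h1 h2
    intro k l x
    rw [covDerVF, Fintype.sum_sum_type]
    cases k with
    | inl k =>
      cases l with
      | inl l =>
        simp only [Sum.elim_inl, Sum.elim_inr]
        rw [pd_inl_comp (fun z => ξ₁ z l) k x]
        simp only [chr_lll hg₁n hg₂n, chr_l_zero₂ hg₁n hg₂n, zero_mul,
          Finset.sum_const_zero, add_zero, Sum.inl.injEq]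
        have h := h1 k l (x ∘ Sum.inl)
        rw [covDerVF] at h
        exact h
      | inr l =>
        simp only [Sum.elim_inl, Sum.elim_inr]
        rw [pd_inl_of_inr (fun z => ξ₂ z l) k x]
        simp only [chr_r_zero₁ hg₁n hg₂n, zero_mul, Finset.sum_const_zero,
          add_zero, reduceCtorEq, if_false]
    | inr k =>
      cases l with
      | inl l =>
        simp only [Sum.elim_inl, Sum.elim_inr]
        rw [pd_inr_of_inl (fun z => ξ₁ z l) k x]
        simp only [chr_l_zero₁ hg₁n hg₂n, zero_mul, Finset.sum_const_zero,
          add_zero, reduceCtorEq, if_false]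
      | inr l =>
        simp only [Sum.elim_inl, Sum.elim_inr]
        rw [pd_inr_comp (fun z => ξ₂ z l) k x]
        simp only [chr_rrr hg₁n hg₂n, chr_r_zero₂ hg₁n hg₂n, zero_mul,
          Finset.sum_const_zero, zero_add, Sum.inr.injEq]
        have h := h2 k l (x ∘ Sum.inr)
        rw [covDerVF] at h
        exact h
end
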